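/- arXiv:1711.07176 — 4 statements merged into one kernel-verified Lean document; each statement's English description precedes it below -/
import Mathlib

section
/- Let 𝐣 be a reduced word obtained from the reduced word 𝐢 for w₀ by a 2-move or a 3-move at position k, and let R: ℝ_{>0}^N → ℝ_{>0}^N be the corresponding Lusztig transition map. Then for every a ∈ [n] and every x ∈ ℝ_{>0}^N one has Σ_{ℓ∈[N], j_ℓ=a} (R(x))_ℓ = Σ_{ℓ∈[N], i_ℓ=a} x_ℓ; that is, the functions κ_{𝐢,a}(x) = Σ_{k∈[N], i_k=a} x_k satisfy κ_{𝐣,a} ∘ R = κ_{𝐢,a}. -/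
open Finset

/-- The Coxeter matrix attached to a simply-laced (symmetric) Cartan matrix `c`. -/
def cartanToCoxeter {n : ℕ} (c : Fin n → Fin n → ℤ) (hsymm : ∀ a b, c a b = c b a) :
    CoxeterMatrix (Fin n) where
  M := Matrix.of fun a b => if a = b then 1 else if c a b = 0 then 2 else 3
  isSymm := by
    ext a b
    simp only [Matrix.transpose_apply, Matrix.of_apply]
    rw [hsymm a b]
    by_cases h : a = b
    · simp [h]
    · simp [h, Ne.symm h]
  diagonal := by intro a; simp
  off_diagonal := by
    intro a b hab
    simp only [Matrix.of_apply, if_neg hab]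
    split <;> omega

/-- The index set `M = {-1, …, -n} ∪ {1, …, N}` as a finite set of integers. -/
noncomputable def Mfin (n N : ℕ) : Finset ℤ := Finset.Icc (-(n : ℤ)) (-1) ∪ Finset.Icc 1 (N : ℤ)

/-- The negative index `-a ∈ M` attached to a letter `a ∈ [n]` (`a : Fin n` is `a+1 ∈ [n]`). -/
def negIdx {n : ℕ} (a : Fin n) : ℤ := -((a : ℕ) : ℤ) - 1

/-- The word `(i_1, …, i_N)` as a list of letters. -/
def wordOf {n : ℕ} (N : ℕ) (i : ℤ → Fin n) : List (Fin n) :=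
  (List.range N).map fun t => i ((t : ℤ) + 1)

/-- `kp` is the function `k ↦ k⁺`: the smallest `ℓ ∈ M` with `ℓ > k` and `i_ℓ = i_k`,
and `N+1` if no such `ℓ` exists. -/
def IsSucc {n : ℕ} (N : ℕ) (i : ℤ → Fin n) (kp : ℤ → ℤ) : Prop :=
  ∀ k ∈ Mfin n N, k < kp k ∧
    ((kp k = (N : ℤ) + 1 ∧ ∀ ℓ ∈ Mfin n N, k < ℓ → i ℓ ≠ i k) ∨
      (kp k ∈ Mfin n N ∧ i (kp k) = i k ∧ ∀ ℓ ∈ Mfin n N, k < ℓ → i ℓ = i k → kp k ≤ ℓ))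

/-- `km` is the function `k ↦ k⁻` (for `k ∈ [N]`): the largest `ℓ ∈ M` with `ℓ < k` and
`i_ℓ = i_k`. -/
def IsPred {n : ℕ} (N : ℕ) (i : ℤ → Fin n) (km : ℤ → ℤ) : Prop :=
  ∀ k : ℤ, 1 ≤ k → k ≤ (N : ℤ) →
    km k ∈ Mfin n N ∧ km k < k ∧ i (km k) = i k ∧
      ∀ ℓ ∈ Mfin n N, ℓ < k → i ℓ = i k → ℓ ≤ km k

/-- `m a` is the number of occurrences of the letter `a` in the word `i`. -/
def IsMult {n : ℕ} (N : ℕ) (i : ℤ → Fin n) (m : Fin n → ℕ) : Prop :=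
  ∀ a : Fin n, m a = ((Finset.Icc 1 (N : ℤ)).filter fun k => i k = a).card

/-- `pos a r` is `k(a,r)`, the position of the `r`-th occurrence of the letter `a`. -/
def IsPos {n : ℕ} (N : ℕ) (i : ℤ → Fin n) (m : Fin n → ℕ) (pos : Fin n → ℕ → ℤ) : Prop :=
  ∀ a : Fin n, ∀ r : ℕ, 1 ≤ r → r ≤ m a →
    pos a r ∈ Finset.Icc 1 (N : ℤ) ∧ i (pos a r) = a ∧
      ((Finset.Icc 1 (pos a r)).filter fun k => i k = a).card = r

/-- `j` is obtained from `i` by a 2-move at position `k`. -/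
def IsTwoMove {n : ℕ} (N : ℕ) (c : Fin n → Fin n → ℤ) (i j : ℤ → Fin n) (k : ℤ) : Prop :=
  1 ≤ k ∧ k + 1 ≤ (N : ℤ) ∧
  (∀ ℓ : ℤ, 1 ≤ ℓ → ℓ ≤ (N : ℤ) → ℓ ≠ k → ℓ ≠ k + 1 → j ℓ = i ℓ) ∧
  j k = i (k + 1) ∧ j (k + 1) = i k ∧ c (i k) (i (k + 1)) = 0

/-- `j` is obtained from `i` by a 3-move at position `k`. -/
def IsThreeMove {n : ℕ} (N : ℕ) (c : Fin n → Fin n → ℤ) (i j : ℤ → Fin n) (k : ℤ) : Prop :=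
  2 ≤ k ∧ k + 1 ≤ (N : ℤ) ∧
  (∀ ℓ : ℤ, 1 ≤ ℓ → ℓ ≤ (N : ℤ) → ℓ ≠ k - 1 → ℓ ≠ k → ℓ ≠ k + 1 → j ℓ = i ℓ) ∧
  j (k - 1) = i k ∧ j (k + 1) = i k ∧ j k = i (k - 1) ∧ i (k - 1) = i (k + 1) ∧
  c (i k) (i (k + 1)) = -1

/-- The transition map swapping the coordinates `k` and `k+1` (2-move transition map). -/
noncomputable def swapMap (k : ℤ) (x : ℤ → ℝ) : ℤ → ℝ := fun ℓ =>
  if ℓ = k then x (k + 1) else if ℓ = k + 1 then x k else x ℓ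

/-- The Lusztig transition map of a 3-move at position `k`. -/
noncomputable def lusR3 (k : ℤ) (x : ℤ → ℝ) : ℤ → ℝ := fun ℓ =>
  if ℓ = k - 1 then x k * x (k + 1) / (x (k - 1) + x (k + 1))
  else if ℓ = k then x (k - 1) + x (k + 1)
  else if ℓ = k + 1 then x (k - 1) * x k / (x (k - 1) + x (k + 1))
  else x ℓ

/-- The string transition map of a 3-move at position `k`. -/
noncomputable def strS3 (k : ℤ) (x : ℤ → ℝ) : ℤ → ℝ := fun ℓ =>
  if ℓ = k - 1 then x k * x (k + 1) / (x (k - 1) * x (k + 1) + x k)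
  else if ℓ = k then x (k - 1) * x (k + 1)
  else if ℓ = k + 1 then (x (k - 1) * x (k + 1) + x k) / x (k + 1)
  else x ℓ

/-- The function `ν_{𝐢,a}`. -/
noncomputable def nuFun {n : ℕ} (N : ℕ) (c : Fin n → Fin n → ℤ) (i : ℤ → Fin n)
    (lam : Fin n → ℝ) (x : ℤ → ℝ) (a : Fin n) : ℝ :=
  lam a * ∑ k ∈ (Finset.Icc 1 (N : ℤ)).filter (fun k => i k = a),
    (x k)⁻¹ * ∏ ℓ ∈ Finset.Ioc k (N : ℤ), x ℓ ^ (-(c (i ℓ) a))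

/-- The function `ν^∨_{𝐢,a}`. -/
noncomputable def nuDual {n : ℕ} (N : ℕ) (c : Fin n → Fin n → ℤ) (i : ℤ → Fin n)
    (lam : Fin n → ℝ) (x : ℤ → ℝ) (a : Fin n) : ℝ :=
  (∏ b : Fin n, lam b ^ (c a b)) * ∑ k ∈ (Finset.Icc 1 (N : ℤ)).filter (fun k => i k = a),
    (x k)⁻¹ * ∏ ℓ ∈ Finset.Ioc k (N : ℤ), x ℓ ^ (-(c (i ℓ) a))

/-- The map `grι_𝐢 : ℝ_{>0}^{[n]} × ℝ_{>0}^{[N]} → ℝ_{>0}^M`. -/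
noncomputable def grIota {n : ℕ} (N : ℕ) (star : Fin n → Fin n) (i : ℤ → Fin n) (kp : ℤ → ℤ)
    (lam : Fin n → ℝ) (x : ℤ → ℝ) : ℤ → ℝ := fun k =>
  if k < 0 then (x (kp k))⁻¹
  else if kp k ≤ (N : ℤ) then x k * (x (kp k))⁻¹
  else x k * (lam (star (i k)))⁻¹

/-- The map `gr𝒞_𝐢 : ℝ_{>0}^{[n]} × ℝ_{>0}^{[N]} → ℝ_{>0}^M`. -/
noncomputable def grC {n : ℕ} (N : ℕ) (c : Fin n → Fin n → ℤ) (i : ℤ → Fin n) (kp : ℤ → ℤ)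
    (pos : Fin n → ℕ → ℤ) (lam : Fin n → ℝ) (x : ℤ → ℝ) : ℤ → ℝ := fun k =>
  if k < 0 then
    (lam (i k))⁻¹ * x (pos (i k) 1) *
      ∏ ℓ ∈ (Finset.Icc 1 (N : ℤ)).filter (fun ℓ => pos (i k) 1 < ℓ), x ℓ ^ (c (i ℓ) (i k))
  else if kp k ≤ (N : ℤ) then
    (x k)⁻¹ * (x (kp k))⁻¹ * ∏ ℓ ∈ Finset.Ioo k (kp k), x ℓ ^ (-(c (i ℓ) (i k)))
  else (x k)⁻¹ * ∏ ℓ ∈ Finset.Ioc k (N : ℤ), x ℓ ^ (-(c (i ℓ) (i k)))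

/-- The λ-components of the map `grCA_𝐢 : ℝ_{>0}^M → ℝ_{>0}^{[n]} × ℝ_{>0}^{[N]}`. -/
noncomputable def grCALam {n : ℕ} (star : Fin n → Fin n) (m : Fin n → ℕ)
    (pos : Fin n → ℕ → ℤ) (x : ℤ → ℝ) : Fin n → ℝ := fun a =>
  (x (pos (star a) (m (star a))))⁻¹

/-- The x-components of the map `grCA_𝐢 : ℝ_{>0}^M → ℝ_{>0}^{[n]} × ℝ_{>0}^{[N]}`. -/
noncomputable def grCAX {n : ℕ} (N : ℕ) (c : Fin n → Fin n → ℤ) (i : ℤ → Fin n)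
    (kp km : ℤ → ℤ) (x : ℤ → ℝ) : ℤ → ℝ := fun k =>
  (x k)⁻¹ * (x (km k))⁻¹ *
    ∏ ℓ ∈ (Mfin n N).filter (fun ℓ => ℓ < k ∧ k < kp ℓ ∧ i ℓ ≠ i k), x ℓ ^ (-(c (i ℓ) (i k)))

/-- The λ-components of the map `ι*_𝐢 : ℝ_{>0}^M → ℝ_{>0}^{[n]} × ℝ_{>0}^{[N]}`. -/
noncomputable def iotaStarLam {n : ℕ} (m : Fin n → ℕ) (pos : Fin n → ℕ → ℤ)
    (x : ℤ → ℝ) : Fin n → ℝ := fun a => (x (pos a (m a)))⁻¹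

/-- The x-components of the map `ι*_𝐢 : ℝ_{>0}^M → ℝ_{>0}^{[n]} × ℝ_{>0}^{[N]}`. -/
noncomputable def iotaStarX (km : ℤ → ℤ) (x : ℤ → ℝ) : ℤ → ℝ := fun k => x (km k) * (x k)⁻¹

/-- The GHKK potential summand `W̃_{-a,𝐢}` on the chart of `𝐢`. -/
noncomputable def WNeg {n : ℕ} (m : Fin n → ℕ) (pos : Fin n → ℕ → ℤ) (y : ℤ → ℝ)
    (a : Fin n) : ℝ :=
  ∑ k ∈ Finset.range (m a), ∏ ℓ ∈ Finset.range (k + 1),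
    (if ℓ = 0 then y (negIdx a) else y (pos a ℓ))⁻¹

/-- The GHKK potential summand `W̃_{i_N,𝐢}` on the chart of `𝐢`. -/
noncomputable def WLast (N : ℕ) (y : ℤ → ℝ) : ℝ := (y (N : ℤ))⁻¹

/-- The Berenstein–Kazhdan decoration summand `f̃_{-a,𝐢}` on the chart of `𝐢`. -/
noncomputable def fNeg {n : ℕ} (N : ℕ) (c : Fin n → Fin n → ℤ) (i : ℤ → Fin n)
    (kp km : ℤ → ℤ) (x : ℤ → ℝ) (a : Fin n) : ℝ :=
  ∑ k ∈ (Finset.Icc 1 (N : ℤ)).filter (fun k => i k = a),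
    (x (km k))⁻¹ * (x k)⁻¹ *
      ∏ ℓ ∈ (Mfin n N).filter (fun ℓ => ℓ < k ∧ k < kp ℓ), x ℓ ^ (-(c (i ℓ) a))

/-- The Berenstein–Kazhdan decoration summand `f̃_{i_N,𝐢}` on the chart of `𝐢`. -/
noncomputable def fLast (N : ℕ) (km : ℤ → ℤ) (x : ℤ → ℝ) : ℝ :=
  x (km (N : ℤ)) * (x (N : ℤ))⁻¹

/-- A vertex of `Γ_𝐢` is frozen iff it is a negative index or a last occurrence. -/
def frozenIdx (N : ℕ) (kp : ℤ → ℤ) (k : ℤ) : Prop := k < 0 ∨ kp k = (N : ℤ) + 1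

instance (N : ℕ) (kp : ℤ → ℤ) : DecidablePred (frozenIdx N kp) := fun k => by
  unfold frozenIdx; infer_instance

/-- The number of arrows from `u` to `v` in the quiver `Γ_𝐢`. -/
noncomputable def gammaArrows {n : ℕ} (N : ℕ) (c : Fin n → Fin n → ℤ) (i : ℤ → Fin n) (kp : ℤ → ℤ) :
    ℤ → ℤ → ℕ := fun u v =>
  if u ∈ Mfin n N ∧ v ∈ Mfin n N ∧ ¬(frozenIdx N kp u ∧ frozenIdx N kp v) ∧
      (v = kp u ∨ (1 ≤ v ∧ v < u ∧ u ≤ (N : ℤ) ∧ u < kp v ∧ kp v < kp u ∧ c (i u) (i v) < 0))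
  then 1 else 0

/-- Quiver mutation at the vertex `k` on arrow-counting functions: steps (i)–(ii) produce `A'`,
truncated subtraction removes a maximal collection of 2-cycles, and arrows between two frozen
vertices are erased. -/
def mutate (frozen : ℤ → Prop) [DecidablePred frozen] (k : ℤ) (A : ℤ → ℤ → ℕ) :
    ℤ → ℤ → ℕ := fun u v =>
  let A' : ℤ → ℤ → ℕ := fun u' v' =>
    if u' = k then A v' k else if v' = k then A k u' else A u' v' + A u' k * A k v'
  if frozen u ∧ frozen v then 0 else A' u v - A' v u

/-- The quiver `Γ^{(j)}` obtained from `Γ_𝐢` by mutating at `v_{k(a,1)}, …, v_{k(a,j)}`. -/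
noncomputable def gammaIter {n : ℕ} (N : ℕ) (c : Fin n → Fin n → ℤ) (i : ℤ → Fin n) (kp : ℤ → ℤ)
    (pos : Fin n → ℕ → ℤ) (a : Fin n) : ℕ → ℤ → ℤ → ℕ
  | 0 => gammaArrows N c i kp
  | (r + 1) => mutate (frozenIdx N kp) (pos a (r + 1)) (gammaIter N c i kp pos a r)

/-- The skew-symmetrized arrow count `ε_{u,v}`. -/
def epsQ (A : ℤ → ℤ → ℕ) (u v : ℤ) : ℤ := (A u v : ℤ) - (A v u : ℤ)

/-- The `A`-cluster mutation at the vertex `k` on points. -/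
noncomputable def muAPoint {n : ℕ} (N : ℕ) (A : ℤ → ℤ → ℕ) (k : ℤ) (x : ℤ → ℝ) :
    ℤ → ℝ := fun u =>
  if u = k then
    (x k)⁻¹ * ((∏ ℓ ∈ (Mfin n N).filter (fun ℓ => 0 < epsQ A ℓ k), x ℓ ^ (epsQ A ℓ k)) +
      (∏ ℓ ∈ (Mfin n N).filter (fun ℓ => epsQ A ℓ k < 0), x ℓ ^ (-(epsQ A ℓ k))))
  else x u

/-- The `X`-cluster mutation at the vertex `k` on points. -/
noncomputable def muXPoint (A : ℤ → ℤ → ℕ) (k : ℤ) (x : ℤ → ℝ) : ℤ → ℝ := fun u =>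
  if u = k then (x k)⁻¹
  else x u * (1 + x k ^ (-(Int.sign (epsQ A k u)))) ^ (-(epsQ A k u))

/-- The transposition of the indices `k` and `k+1`. -/
def swapIdx (k : ℤ) (u : ℤ) : ℤ := if u = k then k + 1 else if u = k + 1 then k else u

/-- Extension of a tuple indexed by a finite set of integers by `0`. -/
def extZ {s : Finset ℤ} (x : {k : ℤ // k ∈ s} → ℤ) : ℤ → ℤ := fun k =>
  if h : k ∈ s then x ⟨k, h⟩ else 0

/-
Away from the positions of the move, the words and the coordinates agree, so only the two or
three coordinates at the move contribute differently. A 2-move just swaps two (letter, coordinate)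
pairs. For a 3-move, `y = R x` satisfies `y_{k-1} + y_{k+1} = x_k` and `y_k = x_{k-1} + x_{k+1}`,
while the letter `i_k` sits at positions `k ± 1` of `𝐣` and the letter `i_{k±1}` at position `k`,
so each letter receives the same total mass on both sides.
-/

theorem Finset.sum_filter_eq_of_eq_on_sdiff {ι α M : Type*} [DecidableEq ι] [DecidableEq α]
    [AddCommMonoid M] {S T : Finset ι} {i j : ι → α} {x y : ι → M} (a : α) (hT : T ⊆ S)
    (hj : ∀ ℓ ∈ S \ T, j ℓ = i ℓ) (hy : ∀ ℓ ∈ S \ T, y ℓ = x ℓ)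
    (hloc : ∑ ℓ ∈ T with j ℓ = a, y ℓ = ∑ ℓ ∈ T with i ℓ = a, x ℓ) :
    ∑ ℓ ∈ S with j ℓ = a, y ℓ = ∑ ℓ ∈ S with i ℓ = a, x ℓ := by
  rw [sum_filter, sum_filter] at hloc ⊢
  rw [← sum_sdiff hT, ← sum_sdiff hT (f := fun ℓ => if i ℓ = a then x ℓ else 0), hloc]
  congr 1
  exact sum_congr rfl fun ℓ hℓ => by rw [hj ℓ hℓ, hy ℓ hℓ]

section Moves

variable {n N : ℕ} {c : Fin n → Fin n → ℤ} {i j : ℤ → Fin n} {k : ℤ}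

/-- The function `κ_{𝐢,a}`. -/
noncomputable def kappa (N : ℕ) (i : ℤ → Fin n) (a : Fin n) (x : ℤ → ℝ) : ℝ :=
  ∑ ℓ ∈ Icc 1 (N : ℤ) with i ℓ = a, x ℓ

theorem swapMap_apply_left (x : ℤ → ℝ) : swapMap k x k = x (k + 1) := by
  simp [swapMap]

theorem swapMap_apply_right (x : ℤ → ℝ) : swapMap k x (k + 1) = x k := by
  simp [swapMap]

theorem swapMap_apply_of_ne (x : ℤ → ℝ) {ℓ : ℤ} (h₀ : ℓ ≠ k) (h₁ : ℓ ≠ k + 1) :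
    swapMap k x ℓ = x ℓ := by
  simp [swapMap, h₀, h₁]

theorem lusR3_apply_self (x : ℤ → ℝ) : lusR3 k x k = x (k - 1) + x (k + 1) := by
  rw [lusR3, if_neg (by omega), if_pos rfl]

theorem lusR3_apply_sub_one_add_lusR3_apply_add_one (x : ℤ → ℝ)
    (hs : x (k - 1) + x (k + 1) ≠ 0) : lusR3 k x (k - 1) + lusR3 k x (k + 1) = x k := by
  rw [lusR3, lusR3, if_pos rfl, if_neg (by omega), if_neg (by omega), if_pos rfl]
  field_simp
  ring

theorem lusR3_apply_of_ne (x : ℤ → ℝ) {ℓ : ℤ} (hlo : ℓ ≠ k - 1) (h₀ : ℓ ≠ k) (hhi : ℓ ≠ k + 1) :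
    lusR3 k x ℓ = x ℓ := by
  simp [lusR3, hlo, h₀, hhi]

theorem kappa_swapMap (h : IsTwoMove N c i j k) (a : Fin n) (x : ℤ → ℝ) :
    kappa N j a (swapMap k x) = kappa N i a x := by
  obtain ⟨hk₁, hkN, hout, hjk, hjk₁, -⟩ := h
  have hne : k ≠ k + 1 := by omega
  refine sum_filter_eq_of_eq_on_sdiff (T := {k, k + 1}) a ?_ ?_ ?_ ?_
  · intro u hu
    simp only [mem_insert, mem_singleton] at hu
    rcases hu with rfl | rfl <;> simp <;> omega
  · intro ℓ hℓ
    simp only [mem_sdiff, mem_Icc, mem_insert, mem_singleton, not_or] at hℓ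
    exact hout ℓ hℓ.1.1 hℓ.1.2 hℓ.2.1 hℓ.2.2
  · intro ℓ hℓ
    simp only [mem_sdiff, mem_insert, mem_singleton, not_or] at hℓ
    exact swapMap_apply_of_ne x hℓ.2.1 hℓ.2.2
  · rw [sum_filter, sum_filter, sum_pair hne, sum_pair hne, hjk, hjk₁, swapMap_apply_left,
      swapMap_apply_right, add_comm]

theorem kappa_lusR3 (h : IsThreeMove N c i j k) (a : Fin n) (x : ℤ → ℝ)
    (hs : x (k - 1) + x (k + 1) ≠ 0) :
    kappa N j a (lusR3 k x) = kappa N i a x := by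
  obtain ⟨hk₂, hkN, hout, hjm, hjp, hjk, hii, -⟩ := h
  have sum_triple : ∀ f : ℤ → ℝ,
      ∑ ℓ ∈ ({k - 1, k, k + 1} : Finset ℤ), f ℓ = f (k - 1) + f k + f (k + 1) := by
    intro f
    rw [sum_insert (by simp; omega), sum_pair (by omega), add_assoc]
  refine sum_filter_eq_of_eq_on_sdiff (T := {k - 1, k, k + 1}) a ?_ ?_ ?_ ?_
  · intro u hu
    simp only [mem_insert, mem_singleton] at hu
    rcases hu with rfl | rfl | rfl <;> simp <;> omega
  · intro ℓ hℓ
    simp only [mem_sdiff, mem_Icc, mem_insert, mem_singleton, not_or] at hℓ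
    exact hout ℓ hℓ.1.1 hℓ.1.2 hℓ.2.1 hℓ.2.2.1 hℓ.2.2.2
  · intro ℓ hℓ
    simp only [mem_sdiff, mem_insert, mem_singleton, not_or] at hℓ
    exact lusR3_apply_of_ne x hℓ.2.1 hℓ.2.2.1 hℓ.2.2.2
  · have hsum := lusR3_apply_sub_one_add_lusR3_apply_add_one x hs
    rw [sum_filter, sum_filter, sum_triple, sum_triple, hjm, hjp, hjk, ← hii,
      lusR3_apply_self]
    split_ifs <;> linarith

end Moves

theorem statement0_general
    (n N : ℕ)
    (c : Fin n → Fin n → ℤ)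
    (i : ℤ → Fin n)
    (j : ℤ → Fin n)
    (k : ℤ) (R : (ℤ → ℝ) → (ℤ → ℝ))
    (hmove : (IsTwoMove N c i j k ∧ R = swapMap k) ∨
             (IsThreeMove N c i j k ∧ R = lusR3 k)) :
    ∀ (a : Fin n) (x : ℤ → ℝ), (∀ ℓ ∈ Finset.Icc 1 (N : ℤ), 0 < x ℓ) →
      ∑ ℓ ∈ (Finset.Icc 1 (N : ℤ)).filter (fun ℓ => j ℓ = a), R x ℓ =
        ∑ ℓ ∈ (Finset.Icc 1 (N : ℤ)).filter (fun ℓ => i ℓ = a), x ℓ := by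
  intro a x hx
  rcases hmove with ⟨hij, rfl⟩ | ⟨hij, rfl⟩
  · exact kappa_swapMap hij a x
  · have hk₂ := hij.1
    have hkN := hij.2.1
    have hs : 0 < x (k - 1) + x (k + 1) :=
      add_pos (hx _ (mem_Icc.2 ⟨by omega, by omega⟩)) (hx _ (mem_Icc.2 ⟨by omega, by omega⟩))
    exact kappa_lusR3 hij a x hs.ne'

/-- invariance of the functions κ_{𝐢,a} under Lusztig transition maps of
2-moves and 3-moves. -/
theorem statement0
    (n N : ℕ) (hn : 1 ≤ n)
    (c : Fin n → Fin n → ℤ)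
    (hdiag : ∀ a, c a a = 2)
    (hsymm : ∀ a b, c a b = c b a)
    (hoff : ∀ a b, a ≠ b → c a b = 0 ∨ c a b = -1)
    (W : Type) [Group W]
    (cs : CoxeterSystem (cartanToCoxeter c hsymm) W)
    (w0 : W)
    (hlong : ∀ w : W, cs.length w ≤ cs.length w0)
    (hN : cs.length w0 = N)
    (i : ℤ → Fin n)
    (hredi : cs.wordProd (wordOf N i) = w0)
    (j : ℤ → Fin n)
    (hredj : cs.wordProd (wordOf N j) = w0)
    (k : ℤ) (R : (ℤ → ℝ) → (ℤ → ℝ))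
    (hmove : (IsTwoMove N c i j k ∧ R = swapMap k) ∨
             (IsThreeMove N c i j k ∧ R = lusR3 k)) :
    ∀ (a : Fin n) (x : ℤ → ℝ), (∀ ℓ ∈ Finset.Icc 1 (N : ℤ), 0 < x ℓ) →
      ∑ ℓ ∈ (Finset.Icc 1 (N : ℤ)).filter (fun ℓ => j ℓ = a), R x ℓ =
        ∑ ℓ ∈ (Finset.Icc 1 (N : ℤ)).filter (fun ℓ => i ℓ = a), x ℓ :=
  statement0_general n N c i j k R hmove
end

section
/- Let 𝐣 be a reduced word obtained from the reduced word 𝐢 for w₀ by a 2-move or a 3-move at position k, and let S: ℝ_{>0}^N → ℝ_{>0}^N be the corresponding string transition map. Then for every a ∈ [n], every λ ∈ ℝ_{>0}^{[n]} and every x ∈ ℝ_{>0}^N one has ν_{𝐣,a}(λ, S(x)) = ν_{𝐢,a}(λ, x), and likewise ν^∨_{𝐣,a}(λ, S(x)) = ν^∨_{𝐢,a}(λ, x). -/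
open Finset

/-!
The sum in `ν_{𝐢,a}` and `ν^∨_{𝐢,a}` can be computed by reading the word from left to right,
starting from `0` and applying at each position `ℓ` the affine update
`s ↦ s * x_ℓ ^ (-c (i_ℓ) a) + [i_ℓ = a] x_ℓ⁻¹`. A move changes only the updates in a window of two
or three consecutive positions, so it suffices that the composite update over the window is
unchanged. For a 2-move the two updates commute because `c (i_k) (i_{k+1}) = 0`; for a 3-move the
three updates with the values `x` and with `S x` compose to the same map, a rational identity
checked according to whether `a` is `i_k`, `i_{k-1} = i_{k+1}`, or neither.
-/

section NuRecursion

variable {n : ℕ} (c : Fin n → Fin n → ℤ) (a : Fin n)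

noncomputable def nuSum (i : ℤ → Fin n) (x : ℤ → ℝ) (m : ℤ) : ℝ :=
  ∑ k ∈ (Icc 1 m).filter (fun k => i k = a), (x k)⁻¹ * ∏ ℓ ∈ Ioc k m, x ℓ ^ (-(c (i ℓ) a))

noncomputable def nuStep (b : Fin n) (y s : ℝ) : ℝ :=
  s * y ^ (-(c b a)) + if b = a then y⁻¹ else 0

theorem nuSum_zero (i : ℤ → Fin n) (x : ℤ → ℝ) : nuSum c a i x 0 = 0 := by
  simp [nuSum]

theorem nuSum_add_one (i : ℤ → Fin n) (x : ℤ → ℝ) {m : ℤ} (hm : 0 ≤ m) :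
    nuSum c a i x (m + 1) = nuStep c a (i (m + 1)) (x (m + 1)) (nuSum c a i x m) := by
  have hnew : m + 1 ∉ Icc 1 m := by simp
  have htail : ∀ k ∈ Icc 1 m, ∏ ℓ ∈ Ioc k (m + 1), x ℓ ^ (-(c (i ℓ) a)) =
      (∏ ℓ ∈ Ioc k m, x ℓ ^ (-(c (i ℓ) a))) * x (m + 1) ^ (-(c (i (m + 1)) a)) := by
    intro k hk
    rw [← insert_Ioc_right_eq_Ioc_add_one (mem_Icc.1 hk).2, prod_insert (by simp), mul_comm]
  unfold nuSum nuStep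
  rw [← insert_Icc_right_eq_Icc_add_one (by omega), filter_insert, sum_mul]
  split_ifs with ha
  · rw [sum_insert (by simp [hnew]), add_comm, Ioc_self, prod_empty, mul_one]
    congr 1
    exact sum_congr rfl fun k hk => by rw [htail k (mem_filter.1 hk).1, mul_assoc]
  · rw [add_zero]
    exact sum_congr rfl fun k hk => by rw [htail k (mem_filter.1 hk).1, mul_assoc]

theorem nuSum_of_pos (i : ℤ → Fin n) (x : ℤ → ℝ) {m : ℤ} (hm : 0 < m) :
    nuSum c a i x m = nuStep c a (i m) (x m) (nuSum c a i x (m - 1)) := by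
  simpa using nuSum_add_one c a i x (m := m - 1) (by omega)

theorem nuSum_eq_of_eqOn_Ioc {i j : ℤ → Fin n} {x y : ℤ → ℝ} {p m : ℤ} (hp : 0 ≤ p)
    (hpm : p ≤ m) (hstart : nuSum c a j y p = nuSum c a i x p)
    (hagree : ∀ ℓ ∈ Ioc p m, j ℓ = i ℓ ∧ y ℓ = x ℓ) :
    nuSum c a j y m = nuSum c a i x m := by
  induction m, hpm using Int.leInduction with
  | base => exact hstart
  | succ m hpm ih =>
    obtain ⟨hj, hy⟩ := hagree (m + 1) (by simp; omega)
    rw [nuSum_add_one c a j y (by omega), nuSum_add_one c a i x (by omega), hj, hy,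
      ih fun ℓ hℓ => hagree ℓ (by simp at hℓ ⊢; omega)]

theorem nuSum_eq_of_eqOn_compl_Ioc {i j : ℤ → Fin n} {x y : ℤ → ℝ} {p q N : ℤ} (hp : 0 ≤ p)
    (hpq : p ≤ q) (hqN : q ≤ N)
    (hout : ∀ ℓ, 1 ≤ ℓ → ℓ ≤ N → (ℓ ≤ p ∨ q < ℓ) → j ℓ = i ℓ ∧ y ℓ = x ℓ)
    (hwindow : nuSum c a j y p = nuSum c a i x p → nuSum c a j y q = nuSum c a i x q) :
    nuSum c a j y N = nuSum c a i x N := by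
  have hbefore : nuSum c a j y p = nuSum c a i x p :=
    nuSum_eq_of_eqOn_Ioc c a le_rfl hp (by rw [nuSum_zero, nuSum_zero])
      fun ℓ hℓ => hout ℓ (by simp at hℓ; omega) (by simp at hℓ; omega) (by simp at hℓ; omega)
  exact nuSum_eq_of_eqOn_Ioc c a (by omega) hqN (hwindow hbefore)
    fun ℓ hℓ => hout ℓ (by simp at hℓ; omega) (by simp at hℓ; omega) (by simp at hℓ; omega)

theorem nuStep_comm {b b' : Fin n} (hdiag : ∀ a, c a a = 2) (hsymm : ∀ a b, c a b = c b a)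
    (hbb' : c b b' = 0) (y y' s : ℝ) :
    nuStep c a b' y' (nuStep c a b y s) = nuStep c a b y (nuStep c a b' y' s) := by
  have hne : b ≠ b' := by rintro rfl; simp [hdiag] at hbb'
  unfold nuStep
  by_cases hb : b = a
  · subst hb
    simp [hne.symm, hsymm b' b, hbb']
  · by_cases hb' : b' = a
    · subst hb'
      simp [hne, hbb']
    · simp only [hb, hb', if_false, add_zero]
      ring

theorem nuStep_braid {b d : Fin n} (hdiag : ∀ a, c a a = 2) (hsymm : ∀ a b, c a b = c b a)
    (hbd : c b d = -1) {x₁ x₂ x₃ : ℝ} (h₁ : 0 < x₁) (h₂ : 0 < x₂) (h₃ : 0 < x₃) (s : ℝ) :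
    nuStep c a d ((x₁ * x₃ + x₂) / x₃) (nuStep c a b (x₁ * x₃)
        (nuStep c a d (x₂ * x₃ / (x₁ * x₃ + x₂)) s)) =
      nuStep c a b x₃ (nuStep c a d x₂ (nuStep c a b x₁ s)) := by
  have hne : b ≠ d := by rintro rfl; simp [hdiag] at hbd
  have hdb : c d b = -1 := by rw [hsymm, hbd]
  have hP : 0 < x₁ * x₃ + x₂ := by positivity
  unfold nuStep
  by_cases hb : b = a
  · subst hb
    simp only [hdb, Int.reduceNeg, neg_neg, zpow_ofNat, pow_one, hne.symm, ↓reduceIte, add_zero,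
      hdiag, zpow_neg, mul_inv_rev]
    field_simp
    ring
  · by_cases hd : d = a
    · subst hd
      simp only [hdiag, Int.reduceNeg, zpow_neg, zpow_ofNat, ↓reduceIte, inv_div, hbd, neg_neg,
        pow_one, hne, add_zero]
      field_simp
      ring
    · simp only [hb, hd, if_false, add_zero]
      rw [div_zpow, mul_zpow, div_zpow, mul_zpow]
      field_simp

theorem nuSum_swapMap (hdiag : ∀ a, c a a = 2) (hsymm : ∀ a b, c a b = c b a) {N : ℕ}
    {i j : ℤ → Fin n} {k : ℤ} (hmove : IsTwoMove N c i j k) (x : ℤ → ℝ) :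
    nuSum c a j (swapMap k x) N = nuSum c a i x N := by
  obtain ⟨hk, hkN, hout, hjk, hjk', hc⟩ := hmove
  refine nuSum_eq_of_eqOn_compl_Ioc c a (p := k - 1) (q := k + 1) (by omega) (by omega) hkN
    (fun ℓ h₁ h₂ hℓ => ⟨hout ℓ h₁ h₂ (by omega) (by omega), ?_⟩) fun hstart => ?_
  · rw [swapMap, if_neg (by omega), if_neg (by omega)]
  · rw [nuSum_of_pos c a _ _ (by omega : 0 < k + 1), add_sub_cancel_right,
      nuSum_of_pos c a _ _ (by omega : 0 < k), nuSum_of_pos c a i x (by omega : 0 < k + 1),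
      add_sub_cancel_right, nuSum_of_pos c a i x (by omega : 0 < k), hstart, hjk, hjk']
    simp only [swapMap, ↓reduceIte, show k + 1 ≠ k by omega]
    exact (nuStep_comm c a hdiag hsymm hc _ _ _).symm

theorem nuSum_strS3 (hdiag : ∀ a, c a a = 2) (hsymm : ∀ a b, c a b = c b a) {N : ℕ}
    {i j : ℤ → Fin n} {k : ℤ} (hmove : IsThreeMove N c i j k) {x : ℤ → ℝ}
    (hx : ∀ ℓ ∈ Icc 1 (N : ℤ), 0 < x ℓ) :
    nuSum c a j (strS3 k x) N = nuSum c a i x N := by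
  obtain ⟨hk, hkN, hout, hj₁, hj₃, hj₂, hi, hc⟩ := hmove
  have hbd : c (i (k - 1)) (i k) = -1 := by rw [hsymm, hi, hc]
  refine nuSum_eq_of_eqOn_compl_Ioc c a (p := k - 1 - 1) (q := k + 1) (by omega) (by omega) hkN
    (fun ℓ h₁ h₂ hℓ => ⟨hout ℓ h₁ h₂ (by omega) (by omega) (by omega), ?_⟩) fun hstart => ?_
  · rw [strS3, if_neg (by omega), if_neg (by omega), if_neg (by omega)]
  · rw [nuSum_of_pos c a _ _ (by omega : 0 < k + 1), add_sub_cancel_right,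
      nuSum_of_pos c a _ _ (by omega : 0 < k), nuSum_of_pos c a _ _ (by omega : 0 < k - 1),
      nuSum_of_pos c a i x (by omega : 0 < k + 1), add_sub_cancel_right,
      nuSum_of_pos c a i x (by omega : 0 < k), nuSum_of_pos c a i x (by omega : 0 < k - 1),
      hstart, hj₁, hj₂, hj₃, ← hi]
    simp only [strS3, ↓reduceIte, show k ≠ k - 1 by omega, show k + 1 ≠ k - 1 by omega,
      show k + 1 ≠ k by omega]
    exact nuStep_braid c a hdiag hsymm hbd (hx _ (by simp; omega)) (hx _ (by simp; omega))
      (hx _ (by simp; omega)) _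

end NuRecursion

theorem statement1_general
    (n N : ℕ)
    (c : Fin n → Fin n → ℤ)
    (hdiag : ∀ a, c a a = 2)
    (hsymm : ∀ a b, c a b = c b a)
    (i : ℤ → Fin n)
    (j : ℤ → Fin n)
    (k : ℤ) (S : (ℤ → ℝ) → (ℤ → ℝ))
    (hmove : (IsTwoMove N c i j k ∧ S = swapMap k) ∨
             (IsThreeMove N c i j k ∧ S = strS3 k)) :
    ∀ (a : Fin n) (lam : Fin n → ℝ) (x : ℤ → ℝ),
      (∀ b : Fin n, 0 < lam b) → (∀ ℓ ∈ Finset.Icc 1 (N : ℤ), 0 < x ℓ) →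
      nuFun N c j lam (S x) a = nuFun N c i lam x a ∧
        nuDual N c j lam (S x) a = nuDual N c i lam x a := by
  intro a lam x _ hx
  have hsum : nuSum c a j (S x) N = nuSum c a i x N := by
    rcases hmove with ⟨htwo, rfl⟩ | ⟨hthree, rfl⟩
    · exact nuSum_swapMap c a hdiag hsymm htwo x
    · exact nuSum_strS3 c a hdiag hsymm hthree hx
  exact ⟨congrArg (lam a * ·) hsum, congrArg ((∏ b : Fin n, lam b ^ c a b) * ·) hsum⟩

/-- invariance of ν_{𝐢,a} and ν^∨_{𝐢,a} under string transition maps of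
2-moves and 3-moves. -/
theorem statement1
    (n N : ℕ) (hn : 1 ≤ n)
    (c : Fin n → Fin n → ℤ)
    (hdiag : ∀ a, c a a = 2)
    (hsymm : ∀ a b, c a b = c b a)
    (hoff : ∀ a b, a ≠ b → c a b = 0 ∨ c a b = -1)
    (W : Type) [Group W]
    (cs : CoxeterSystem (cartanToCoxeter c hsymm) W)
    (w0 : W)
    (hlong : ∀ w : W, cs.length w ≤ cs.length w0)
    (hN : cs.length w0 = N)
    (i : ℤ → Fin n)
    (hredi : cs.wordProd (wordOf N i) = w0)
    (j : ℤ → Fin n)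
    (hredj : cs.wordProd (wordOf N j) = w0)
    (k : ℤ) (S : (ℤ → ℝ) → (ℤ → ℝ))
    (hmove : (IsTwoMove N c i j k ∧ S = swapMap k) ∨
             (IsThreeMove N c i j k ∧ S = strS3 k)) :
    ∀ (a : Fin n) (lam : Fin n → ℝ) (x : ℤ → ℝ),
      (∀ b : Fin n, 0 < lam b) → (∀ ℓ ∈ Finset.Icc 1 (N : ℤ), 0 < x ℓ) →
      nuFun N c j lam (S x) a = nuFun N c i lam x a ∧
        nuDual N c j lam (S x) a = nuDual N c i lam x a :=
  statement1_general n N c hdiag hsymm i j k S hmove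
end

section
/- Let 𝐢 be a reduced word for w₀. For all λ ∈ ℝ_{>0}^{[n]}, x ∈ ℝ_{>0}^{[N]} and every a ∈ [n], the Gross–Hacking–Keel–Kontsevich potential summands pull back under grι_𝐢 to the Lusztig-cone functions: W̃_{−a,𝐢}(grι_𝐢(λ,x)) = Σ_{k∈[N], i_k=a} x_k, and moreover W̃_{i_N,𝐢}(grι_𝐢(λ,x)) = λ_{(i_N)*} x_N^{-1}. -/
open Finset

/-!
On the seed of `𝐢` the coordinates `y = grι_𝐢(λ, x)` are `y_{a,0} = x_{k(a,1)}⁻¹` and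
`y_{a,r} = x_{k(a,r)} / x_{k(a,r+1)}` for `r < m_a`, so the partial products
`∏_{ℓ ≤ r} y_{a,ℓ}⁻¹` telescope to `x_{k(a,r+1)}`; summing over `r` gives the sum of `x_k` over the
occurrences of `a`. The last letter of `𝐢` is a last occurrence, so `y_N = x_N / λ_{(i_N)*}`.
-/

section LusztigCone

variable {n N : ℕ} {i : ℤ → Fin n}

lemma exists_negIdx_eq {k : ℤ} (hk : k ∈ Icc (-(n : ℤ)) (-1)) : ∃ b : Fin n, negIdx b = k := by
  rw [mem_Icc] at hk
  exact ⟨⟨(-k - 1).toNat, by omega⟩, by simp only [negIdx]; omega⟩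

lemma negIdx_mem_Mfin (a : Fin n) : negIdx a ∈ Mfin n N :=
  mem_union_left _ (mem_Icc.mpr (by simp only [negIdx]; omega))

lemma card_filter_Icc_mono (a : Fin n) {k l : ℤ} (hkl : k ≤ l) :
    ((Icc 1 k).filter fun ℓ => i ℓ = a).card ≤ ((Icc 1 l).filter fun ℓ => i ℓ = a).card :=
  card_le_card (filter_subset_filter _ (Icc_subset_Icc le_rfl hkl))

lemma card_filter_Icc_lt {a : Fin n} {k l : ℤ} (hl : 1 ≤ l) (hil : i l = a) (hkl : k < l) :
    ((Icc 1 k).filter fun ℓ => i ℓ = a).card < ((Icc 1 l).filter fun ℓ => i ℓ = a).card := by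
  refine card_lt_card (ssubset_iff_of_subset ?_ |>.mpr ⟨l, ?_, ?_⟩)
  · exact filter_subset_filter _ (Icc_subset_Icc le_rfl hkl.le)
  · simp [hl, hil]
  · simp [hkl.not_ge]

namespace IsPos

variable {m : Fin n → ℕ} {pos : Fin n → ℕ → ℤ}

lemma succ_injOn (hpos : IsPos N i m pos) (a : Fin n) :
    Set.InjOn (fun r => pos a (r + 1)) (range (m a)) := fun r hr s hs hrs => by
  rw [coe_range, Set.mem_Iio] at hr hs
  have := (hpos a (r + 1) (by omega) hr).2.2
  rw [show pos a (r + 1) = pos a (s + 1) from hrs, (hpos a (s + 1) (by omega) hs).2.2] at this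
  omega

lemma lt_succ (hpos : IsPos N i m pos) (a : Fin n) {r : ℕ} (hr : 1 ≤ r) (hrm : r < m a) :
    pos a r < pos a (r + 1) := by
  by_contra! hle
  have := card_filter_Icc_mono (i := i) a hle
  rw [(hpos a r hr hrm.le).2.2, (hpos a (r + 1) (by omega) hrm).2.2] at this
  omega

lemma image_eq_filter (hpos : IsPos N i m pos) (hm : IsMult N i m) (a : Fin n) :
    (range (m a)).image (fun r => pos a (r + 1)) = (Icc 1 (N : ℤ)).filter fun k => i k = a := by
  refine eq_of_subset_of_card_le ?_ ?_
  · simp only [subset_iff, mem_image, mem_range, mem_filter]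
    rintro _ ⟨r, hr, rfl⟩
    exact ⟨(hpos a (r + 1) (by omega) hr).1, (hpos a (r + 1) (by omega) hr).2.1⟩
  · rw [← hm a, card_image_of_injOn (hpos.succ_injOn a), card_range]

end IsPos

namespace IsSucc

variable {kp : ℤ → ℤ}

lemma apply_le_natCast_add_one (hkp : IsSucc N i kp) {k : ℤ} (hk : k ∈ Mfin n N) :
    kp k ≤ N + 1 := by
  rcases (hkp k hk).2 with ⟨h, -⟩ | ⟨h, -⟩
  · exact h.le
  · simp only [Mfin, mem_union, mem_Icc] at h
    omega

lemma natCast_eq (hkp : IsSucc N i kp) (hN : 1 ≤ N) : kp N = N + 1 := by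
  have hmem : (N : ℤ) ∈ Mfin n N := mem_union_right _ (mem_Icc.mpr ⟨by omega, le_rfl⟩)
  have := (hkp N hmem).1
  have := hkp.apply_le_natCast_add_one hmem
  omega

lemma eq_of_forall_Ioo (hkp : IsSucc N i kp) {k l : ℤ} (hk : k ∈ Mfin n N) (hl : l ∈ Mfin n N)
    (hkl : k < l) (hil : i l = i k)
    (hbetween : ∀ ℓ ∈ Mfin n N, k < ℓ → ℓ < l → i ℓ ≠ i k) : kp k = l := by
  rcases (hkp k hk).2 with ⟨-, hnone⟩ | ⟨hmem, hi, hmin⟩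
  · exact absurd hil (hnone l hl hkl)
  · exact le_antisymm (hmin l hl hkl hil)
      (not_lt.mp fun h => hbetween _ hmem (hkp k hk).1 h hi)

variable {m : Fin n → ℕ} {pos : Fin n → ℕ → ℤ}

lemma apply_pos (hkp : IsSucc N i kp) (hpos : IsPos N i m pos) (a : Fin n) {r : ℕ}
    (hr : 1 ≤ r) (hrm : r < m a) : kp (pos a r) = pos a (r + 1) := by
  obtain ⟨hmem, hi, hcard⟩ := hpos a r hr hrm.le
  obtain ⟨hmem', hi', hcard'⟩ := hpos a (r + 1) (by omega) hrm
  refine hkp.eq_of_forall_Ioo (mem_union_right _ hmem) (mem_union_right _ hmem')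
    (hpos.lt_succ a hr hrm) (hi'.trans hi.symm) fun ℓ _ hlt hgt hiℓ => ?_
  rw [hi] at hiℓ
  have h₁ := card_filter_Icc_lt (by rw [mem_Icc] at hmem; omega) hiℓ hlt
  have h₂ := card_filter_Icc_lt (mem_Icc.mp hmem').1 hi' hgt
  omega

lemma apply_negIdx (hkp : IsSucc N i kp) (hpos : IsPos N i m pos)
    (hneg : ∀ a : Fin n, i (negIdx a) = a) (a : Fin n) (hma : 1 ≤ m a) :
    kp (negIdx a) = pos a 1 := by
  obtain ⟨hmem, hi, hcard⟩ := hpos a 1 le_rfl hma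
  have hpos1 := (mem_Icc.mp hmem).1
  refine hkp.eq_of_forall_Ioo (negIdx_mem_Mfin a) (mem_union_right _ hmem)
    (by simp only [negIdx]; omega) (by rw [hi, hneg]) fun ℓ hℓ hlt hgt hiℓ => ?_
  rw [hneg] at hiℓ
  rcases mem_union.mp hℓ with hℓ | hℓ
  · obtain ⟨b, rfl⟩ := exists_negIdx_eq hℓ
    rw [hneg] at hiℓ
    exact hlt.ne (by rw [hiℓ])
  · have h₁ := card_filter_Icc_lt (k := 0) (mem_Icc.mp hℓ).1 hiℓ (mem_Icc.mp hℓ).1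
    have h₂ := card_filter_Icc_lt hpos1 hi hgt
    omega

end IsSucc

section GrIota

variable {star : Fin n → Fin n} {kp : ℤ → ℤ} {lam : Fin n → ℝ} {x : ℤ → ℝ}

lemma grIota_of_neg {k : ℤ} (hk : k < 0) : grIota N star i kp lam x k = (x (kp k))⁻¹ :=
  if_pos hk

lemma grIota_of_le {k : ℤ} (hk : 0 ≤ k) (hkp : kp k ≤ N) :
    grIota N star i kp lam x k = x k * (x (kp k))⁻¹ := by
  simp only [grIota, if_neg hk.not_gt, if_pos hkp]

lemma grIota_of_gt {k : ℤ} (hk : 0 ≤ k) (hkp : (N : ℤ) < kp k) :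
    grIota N star i kp lam x k = x k * (lam (star (i k)))⁻¹ := by
  simp only [grIota, if_neg hk.not_gt, if_neg hkp.not_ge]

variable {m : Fin n → ℕ} {pos : Fin n → ℕ → ℤ}

lemma prod_range_inv_grIota (hkp : IsSucc N i kp) (hpos : IsPos N i m pos)
    (hneg : ∀ a : Fin n, i (negIdx a) = a) (hx : ∀ ℓ ∈ Icc 1 (N : ℤ), x ℓ ≠ 0)
    (a : Fin n) {r : ℕ} (hr : r < m a) :
    ∏ ℓ ∈ range (r + 1), (if ℓ = 0 then grIota N star i kp lam x (negIdx a)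
      else grIota N star i kp lam x (pos a ℓ))⁻¹ = x (pos a (r + 1)) := by
  induction r with
  | zero =>
    rw [prod_range_one, if_pos rfl, grIota_of_neg (by simp only [negIdx]; omega),
      hkp.apply_negIdx hpos hneg a hr, inv_inv]
  | succ r ih =>
    obtain ⟨hmem, -, -⟩ := hpos a (r + 1) (by omega) (by omega)
    obtain ⟨hmem', -, -⟩ := hpos a (r + 2) (by omega) hr
    have hsucc := hkp.apply_pos hpos a (by omega) hr
    rw [prod_range_succ, ih (by omega), if_neg (by omega),
      grIota_of_le (by rw [mem_Icc] at hmem; omega) (hsucc ▸ (mem_Icc.mp hmem').2), hsucc,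
      mul_inv, inv_inv, mul_inv_cancel_left₀ (hx _ hmem)]

lemma WNeg_grIota (hkp : IsSucc N i kp) (hm : IsMult N i m) (hpos : IsPos N i m pos)
    (hneg : ∀ a : Fin n, i (negIdx a) = a) (hx : ∀ ℓ ∈ Icc 1 (N : ℤ), x ℓ ≠ 0) (a : Fin n) :
    WNeg m pos (grIota N star i kp lam x) a =
      ∑ k ∈ (Icc 1 (N : ℤ)).filter (fun k => i k = a), x k := by
  rw [← hpos.image_eq_filter hm a, sum_image (hpos.succ_injOn a)]
  exact sum_congr rfl fun r hr => prod_range_inv_grIota hkp hpos hneg hx a (mem_range.mp hr)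

lemma WLast_grIota (hkp : IsSucc N i kp) (hN : 1 ≤ N) :
    WLast N (grIota N star i kp lam x) = lam (star (i N)) * (x N)⁻¹ := by
  rw [WLast, grIota_of_gt (by omega) (by rw [hkp.natCast_eq hN]; omega), mul_inv, inv_inv,
    mul_comm]

end GrIota

end LusztigCone

theorem statement4_general
    (n N : ℕ) (hn : 1 ≤ n)
    (c : Fin n → Fin n → ℤ)
    (hsymm : ∀ a b, c a b = c b a)
    (W : Type) [Group W]
    (cs : CoxeterSystem (cartanToCoxeter c hsymm) W)
    (w0 : W)
    (hlong : ∀ w : W, cs.length w ≤ cs.length w0)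
    (hN : cs.length w0 = N)
    (i : ℤ → Fin n)
    (hnegi : ∀ a : Fin n, i (negIdx a) = a)
    (kpi : ℤ → ℤ) (hkpi : IsSucc N i kpi)
    (m : Fin n → ℕ) (hm : IsMult N i m)
    (pos : Fin n → ℕ → ℤ) (hpos : IsPos N i m pos)
    (star : Fin n → Fin n)
    : ∀ (a : Fin n) (lam : Fin n → ℝ) (x : ℤ → ℝ),
      (∀ b : Fin n, 0 < lam b) → (∀ ℓ ∈ Finset.Icc 1 (N : ℤ), 0 < x ℓ) →
      WNeg m pos (grIota N star i kpi lam x) a =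
        ∑ k ∈ (Finset.Icc 1 (N : ℤ)).filter (fun k => i k = a), x k ∧
      WLast N (grIota N star i kpi lam x) = lam (star (i (N : ℤ))) * (x (N : ℤ))⁻¹ := by
  intro a lam x _ hx
  have hN1 : 1 ≤ N := by
    simpa [hN, cs.length_simple] using hlong (cs.simple ⟨0, hn⟩)
  exact ⟨WNeg_grIota hkpi hm hpos hnegi (fun ℓ hℓ => (hx ℓ hℓ).ne') a, WLast_grIota hkpi hN1⟩

/-- pullback of the GHKK potential summands under grι_𝐢 gives the
Lusztig-cone functions. -/
theorem statement4
    (n N : ℕ) (hn : 1 ≤ n)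
    (c : Fin n → Fin n → ℤ)
    (hdiag : ∀ a, c a a = 2)
    (hsymm : ∀ a b, c a b = c b a)
    (hoff : ∀ a b, a ≠ b → c a b = 0 ∨ c a b = -1)
    (W : Type) [Group W]
    (cs : CoxeterSystem (cartanToCoxeter c hsymm) W)
    (w0 : W)
    (hlong : ∀ w : W, cs.length w ≤ cs.length w0)
    (hN : cs.length w0 = N)
    (i : ℤ → Fin n)
    (hredi : cs.wordProd (wordOf N i) = w0)
    (hnegi : ∀ a : Fin n, i (negIdx a) = a)
    (kpi : ℤ → ℤ) (hkpi : IsSucc N i kpi)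
    (m : Fin n → ℕ) (hm : IsMult N i m)
    (pos : Fin n → ℕ → ℤ) (hpos : IsPos N i m pos)
    (star : Fin n → Fin n)
    (hstar : ∀ a : Fin n, w0 * cs.simple a * w0⁻¹ = cs.simple (star a))
    : ∀ (a : Fin n) (lam : Fin n → ℝ) (x : ℤ → ℝ),
      (∀ b : Fin n, 0 < lam b) → (∀ ℓ ∈ Finset.Icc 1 (N : ℤ), 0 < x ℓ) →
      WNeg m pos (grIota N star i kpi lam x) a =
        ∑ k ∈ (Finset.Icc 1 (N : ℤ)).filter (fun k => i k = a), x k ∧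
      WLast N (grIota N star i kpi lam x) = lam (star (i (N : ℤ))) * (x (N : ℤ))⁻¹ :=
  statement4_general n N hn c hsymm W cs w0 hlong hN i hnegi kpi hkpi m hm pos hpos star
end

section
/- Let 𝐢 be a reduced word for w₀. For all λ ∈ ℝ_{>0}^{[n]}, x ∈ ℝ_{>0}^{[N]} and every a ∈ [n], the Gross–Hacking–Keel–Kontsevich potential summands pull back under gr𝒞_𝐢 to the graded-string-cone functions: W̃_{−a,𝐢}(gr𝒞_𝐢(λ,x)) = ν_{𝐢,a}(λ,x), and moreover W̃_{i_N,𝐢}(gr𝒞_𝐢(λ,x)) = x_N. -/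
open Finset

/-!
Write `T_k = x_k⁻¹ ∏_{ℓ > k} x_ℓ^{-c_{i_ℓ,a}}` (`nuTerm`) for the summand of `ν_{𝐢,a}` at an
occurrence `k` of `a`. The coordinate of `gr𝒞_𝐢(λ,x)` at `-a` is `(λ_a T_{k(a,1)})⁻¹`, and at an
occurrence `k` with `k⁺ ≤ N` its inverse is `T_{k⁺} / T_k`, because `c_{a,a} = 2`. Hence the
`r`-th partial product in `W̃_{-a,𝐢}` telescopes to `λ_a T_{k(a,r+1)}`, and summing over `r`
gives `ν_{𝐢,a}`. At `k = N` there is no later occurrence, so the last coordinate is `x_N⁻¹`.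
-/

lemma one_le_length_of_forall_length_le {B W : Type*} [Group W] {M : CoxeterMatrix B}
    (cs : CoxeterSystem M W) (b : B) {w₀ : W} (hlong : ∀ w : W, cs.length w ≤ cs.length w₀) :
    1 ≤ cs.length w₀ :=
  cs.length_simple b ▸ hlong (cs.simple b)

lemma mem_Mfin_of_mem_Icc {n N : ℕ} {k : ℤ} (hk : k ∈ Icc 1 (N : ℤ)) : k ∈ Mfin n N :=
  mem_union_right _ hk

lemma prod_range_succ_eq_of_mul_eq {α : Type*} [CommMonoid α] {u T : ℕ → α} {m : ℕ}
    (h0 : 0 < m → u 0 = T 0) (hstep : ∀ r, r + 1 < m → T r * u (r + 1) = T (r + 1)) :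
    ∀ r < m, ∏ ℓ ∈ range (r + 1), u ℓ = T r := by
  intro r hr
  induction r with
  | zero => rw [prod_range_one, h0 hr]
  | succ r ih => rw [prod_range_succ, ih (by omega), hstep r hr]

section Occurrences

variable {n : ℕ} (i : ℤ → Fin n) (a : Fin n)

noncomputable def occCount (k : ℤ) : ℕ := ((Icc 1 k).filter fun ℓ => i ℓ = a).card

variable {i a}

lemma occCount_mono {u v : ℤ} (h : u ≤ v) : occCount i a u ≤ occCount i a v :=
  card_le_card (filter_subset_filter _ (Icc_subset_Icc_right h))

lemma occCount_lt_occCount {u v : ℤ} (huv : u < v) (hv : 1 ≤ v) (hiv : i v = a) :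
    occCount i a u < occCount i a v := by
  refine card_lt_card ⟨filter_subset_filter _ (Icc_subset_Icc_right huv.le), fun hsub => ?_⟩
  have hv' : v ∈ (Icc 1 v).filter fun ℓ => i ℓ = a := by simp [hv, hiv]
  have := (mem_Icc.mp (mem_filter.mp (hsub hv')).1).2
  omega

lemma eq_of_occCount_eq {u v : ℤ} (hu : 1 ≤ u) (hiu : i u = a) (hv : 1 ≤ v) (hiv : i v = a)
    (h : occCount i a u = occCount i a v) : u = v := by
  rcases lt_trichotomy u v with huv | huv | huv
  · exact absurd h (occCount_lt_occCount huv hv hiv).ne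
  · exact huv
  · exact absurd h (occCount_lt_occCount huv hu hiu).ne'

variable {N : ℕ} {m : Fin n → ℕ} {pos : Fin n → ℕ → ℤ}

lemma IsPos.occCount_eq (hpos : IsPos N i m pos) {r : ℕ} (hr : 1 ≤ r) (hrm : r ≤ m a) :
    occCount i a (pos a r) = r :=
  (hpos a r hr hrm).2.2

lemma IsPos.pos_lt_pos_succ (hpos : IsPos N i m pos) {r : ℕ} (hr : 1 ≤ r) (hrm : r + 1 ≤ m a) :
    pos a r < pos a (r + 1) := by
  by_contra! h
  have := occCount_mono (i := i) (a := a) h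
  rw [hpos.occCount_eq hr (by omega), hpos.occCount_eq (by omega) hrm] at this
  omega

lemma IsPos.pos_mem (hpos : IsPos N i m pos) {r : ℕ} (hr : 1 ≤ r) (hrm : r ≤ m a) :
    pos a r ∈ (Icc 1 (N : ℤ)).filter fun ℓ => i ℓ = a :=
  mem_filter.mpr ⟨(hpos a r hr hrm).1, (hpos a r hr hrm).2.1⟩

lemma IsPos.exists_pos_eq (hpos : IsPos N i m pos) (hm : IsMult N i m) {k : ℤ}
    (hk : k ∈ (Icc 1 (N : ℤ)).filter fun ℓ => i ℓ = a) :
    ∃ r, 1 ≤ r ∧ r ≤ m a ∧ pos a r = k := by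
  obtain ⟨hkN, hik⟩ := mem_filter.mp hk
  obtain ⟨hk1, hkN⟩ := mem_Icc.mp hkN
  have hr : 1 ≤ occCount i a k := (occCount_lt_occCount (sub_one_lt k) hk1 hik).trans_le' (by omega)
  have hrm : occCount i a k ≤ m a := hm a ▸ occCount_mono hkN
  obtain ⟨hpos1, hipos⟩ := mem_filter.mp (hpos.pos_mem hr hrm)
  refine ⟨_, hr, hrm, eq_of_occCount_eq (mem_Icc.mp hpos1).1 hipos hk1 hik ?_⟩
  exact hpos.occCount_eq hr hrm

lemma IsPos.succ_eq (hpos : IsPos N i m pos) {kp : ℤ → ℤ} (hkp : IsSucc N i kp) {r : ℕ}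
    (hr : 1 ≤ r) (hrm : r + 1 ≤ m a) : kp (pos a r) = pos a (r + 1) := by
  obtain ⟨hmem, hia⟩ := mem_filter.mp (hpos.pos_mem (a := a) hr (by omega))
  obtain ⟨hmem', hia'⟩ := mem_filter.mp (hpos.pos_mem (by omega) hrm)
  have hlt := hpos.pos_lt_pos_succ hr hrm
  obtain ⟨hkp_gt, ⟨-, hnone⟩ | ⟨-, hikp, hkp_min⟩⟩ := hkp _ (mem_Mfin_of_mem_Icc hmem)
  · exact absurd (hia'.trans hia.symm) (hnone _ (mem_Mfin_of_mem_Icc hmem') hlt)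
  have hle := hkp_min _ (mem_Mfin_of_mem_Icc hmem') hlt (hia'.trans hia.symm)
  have hkp1 : 1 ≤ kp (pos a r) := by have := (mem_Icc.mp hmem).1; omega
  -- `k⁺` is an occurrence of `a` strictly after the `r`-th and no later than the `(r+1)`-st
  have hcount := occCount_lt_occCount hkp_gt hkp1 (hikp.trans hia)
  have hcount' := occCount_mono (i := i) (a := a) hle
  rw [hpos.occCount_eq hr (by omega)] at hcount
  rw [hpos.occCount_eq (by omega) hrm] at hcount'
  exact eq_of_occCount_eq hkp1 (hikp.trans hia) (mem_Icc.mp hmem').1 hia'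
    (by rw [hpos.occCount_eq (by omega) hrm]; omega)

end Occurrences

section Pullback

variable {n N : ℕ} {c : Fin n → Fin n → ℤ} {i : ℤ → Fin n} {kp : ℤ → ℤ}
  {m : Fin n → ℕ} {pos : Fin n → ℕ → ℤ} {lam : Fin n → ℝ} {x : ℤ → ℝ} {a : Fin n}

variable (N c i) in
noncomputable def nuTerm (a : Fin n) (x : ℤ → ℝ) (k : ℤ) : ℝ :=
  (x k)⁻¹ * ∏ ℓ ∈ Ioc k (N : ℤ), x ℓ ^ (-(c (i ℓ) a))

lemma inv_grC_negIdx (hnegi : i (negIdx a) = a) (hpos1 : 1 ≤ pos a 1) :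
    (grC N c i kp pos lam x (negIdx a))⁻¹ = lam a * nuTerm N c i a x (pos a 1) := by
  have hneg : negIdx a < 0 := by unfold negIdx; omega
  have hIoc : (Icc 1 (N : ℤ)).filter (fun ℓ => pos a 1 < ℓ) = Ioc (pos a 1) N := by
    ext ℓ; simp only [mem_filter, mem_Icc, mem_Ioc]; omega
  simp only [grC, if_pos hneg, hnegi, hIoc, nuTerm, mul_inv, inv_inv, ← prod_inv_distrib,
    ← zpow_neg, mul_assoc]

lemma nuTerm_mul_inv_grC (hc : c a a = 2) {k : ℤ} (hk : 0 ≤ k) (hia : i k = a)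
    (hkpa : i (kp k) = a) (hlt : k < kp k) (hkpN : kp k ≤ N) (hx : ∀ ℓ ∈ Icc k (kp k), x ℓ ≠ 0) :
    nuTerm N c i a x k * (grC N c i kp pos lam x k)⁻¹ = nuTerm N c i a x (kp k) := by
  set P := ∏ ℓ ∈ Ioo k (kp k), x ℓ ^ (-(c (i ℓ) a))
  have hP : P ≠ 0 := prod_ne_zero_iff.mpr fun ℓ hℓ => zpow_ne_zero _ (hx ℓ (Ioo_subset_Icc_self hℓ))
  have hxk := hx k (left_mem_Icc.mpr hlt.le)
  have hxkp := hx (kp k) (right_mem_Icc.mpr hlt.le)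
  have hsplit : ∏ ℓ ∈ Ioc k (N : ℤ), x ℓ ^ (-(c (i ℓ) a)) =
      P * x (kp k) ^ (-2 : ℤ) * ∏ ℓ ∈ Ioc (kp k) (N : ℤ), x ℓ ^ (-(c (i ℓ) a)) := by
    rw [← Ioc_union_Ioc_eq_Ioc hlt.le hkpN, prod_union (Ioc_disjoint_Ioc_of_le le_rfl),
      ← Ioo_insert_right hlt, prod_insert (by simp), hkpa, hc, mul_comm (x (kp k) ^ _)]
  simp only [grC, if_neg hk.not_gt, if_pos hkpN, hia, nuTerm, hsplit]
  field_simp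
  exact mul_div_cancel_left₀ _ hP

lemma prod_inv_grC (hc : c a a = 2) (hnegi : i (negIdx a) = a) (hkp : IsSucc N i kp)
    (hpos : IsPos N i m pos) (hx : ∀ ℓ ∈ Icc 1 (N : ℤ), x ℓ ≠ 0) :
    ∀ r < m a, ∏ ℓ ∈ range (r + 1),
      (if ℓ = 0 then grC N c i kp pos lam x (negIdx a) else grC N c i kp pos lam x (pos a ℓ))⁻¹ =
        lam a * nuTerm N c i a x (pos a (r + 1)) := by
  refine prod_range_succ_eq_of_mul_eq ?_ fun r hr => ?_
  · intro hm
    rw [if_pos rfl]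
    exact inv_grC_negIdx hnegi (mem_Icc.mp (mem_filter.mp (hpos.pos_mem (a := a) le_rfl hm)).1).1
  · obtain ⟨hmem, hia⟩ := mem_filter.mp (hpos.pos_mem (a := a) (r := r + 1) (by omega) hr.le)
    obtain ⟨hmem', hia'⟩ := mem_filter.mp (hpos.pos_mem (a := a) (r := r + 2) (by omega) hr)
    have hlt := hpos.pos_lt_pos_succ (a := a) (r := r + 1) (by omega) hr
    rw [← hpos.succ_eq hkp (by omega) hr] at hmem' hia' hlt ⊢
    obtain ⟨hk1, -⟩ := mem_Icc.mp hmem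
    obtain ⟨-, hkpN⟩ := mem_Icc.mp hmem'
    rw [if_neg r.succ_ne_zero, mul_assoc, nuTerm_mul_inv_grC hc (zero_le_one.trans hk1) hia hia'
      hlt hkpN fun ℓ hℓ => hx ℓ (Icc_subset_Icc hk1 hkpN hℓ)]

lemma WNeg_grC (hc : c a a = 2) (hnegi : i (negIdx a) = a) (hkp : IsSucc N i kp)
    (hm : IsMult N i m) (hpos : IsPos N i m pos) (hx : ∀ ℓ ∈ Icc 1 (N : ℤ), x ℓ ≠ 0) :
    WNeg m pos (grC N c i kp pos lam x) a = nuFun N c i lam x a := by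
  rw [WNeg, sum_congr rfl fun r hr => prod_inv_grC hc hnegi hkp hpos hx r (mem_range.mp hr),
    ← mul_sum, nuFun]
  congr 1
  refine sum_nbij (fun r => pos a (r + 1)) (fun r hr => hpos.pos_mem (by omega)
    (mem_range.mp hr)) (fun r hr s hs hrs => ?_) (fun k hk => ?_) fun _ _ => rfl
  · have hr' := hpos.occCount_eq (a := a) (r := r + 1) (by omega) (mem_range.mp hr)
    rw [show pos a (r + 1) = pos a (s + 1) from hrs,
      hpos.occCount_eq (by omega) (mem_range.mp hs)] at hr'
    omega
  · obtain ⟨r, hr1, hrm, rfl⟩ := hpos.exists_pos_eq hm hk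
    exact ⟨r - 1, mem_range.mpr (by omega), by simp only [Nat.sub_add_cancel hr1]⟩

lemma WLast_grC (hN : 1 ≤ N) (hkp : IsSucc N i kp) :
    WLast N (grC N c i kp pos lam x) = x N := by
  have hlt := (hkp N (mem_Mfin_of_mem_Icc (mem_Icc.mpr ⟨by omega, le_rfl⟩))).1
  simp only [WLast, grC, if_neg (show ¬ (N : ℤ) < 0 by omega), if_neg hlt.not_ge, Ioc_self,
    prod_empty, mul_one, inv_inv]

end Pullback

theorem statement6_general
    (n N : ℕ) (hn : 1 ≤ n)
    (c : Fin n → Fin n → ℤ)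
    (hdiag : ∀ a, c a a = 2)
    (hsymm : ∀ a b, c a b = c b a)
    (W : Type) [Group W]
    (cs : CoxeterSystem (cartanToCoxeter c hsymm) W)
    (w0 : W)
    (hlong : ∀ w : W, cs.length w ≤ cs.length w0)
    (hN : cs.length w0 = N)
    (i : ℤ → Fin n)
    (hnegi : ∀ a : Fin n, i (negIdx a) = a)
    (kpi : ℤ → ℤ) (hkpi : IsSucc N i kpi)
    (m : Fin n → ℕ) (hm : IsMult N i m)
    (pos : Fin n → ℕ → ℤ) (hpos : IsPos N i m pos)
    : ∀ (a : Fin n) (lam : Fin n → ℝ) (x : ℤ → ℝ),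
      (∀ b : Fin n, 0 < lam b) → (∀ ℓ ∈ Finset.Icc 1 (N : ℤ), 0 < x ℓ) →
      WNeg m pos (grC N c i kpi pos lam x) a = nuFun N c i lam x a ∧
      WLast N (grC N c i kpi pos lam x) = x (N : ℤ) := by
  intro a lam x _ hx
  have hN1 : 1 ≤ N := hN ▸ one_le_length_of_forall_length_le cs ⟨0, hn⟩ hlong
  exact ⟨WNeg_grC (hdiag a) (hnegi a) hkpi hm hpos fun ℓ hℓ => (hx ℓ hℓ).ne',
    WLast_grC hN1 hkpi⟩

/-- pullback of the GHKK potential summands under gr𝒞_𝐢 gives the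
graded-string-cone functions. -/
theorem statement6
    (n N : ℕ) (hn : 1 ≤ n)
    (c : Fin n → Fin n → ℤ)
    (hdiag : ∀ a, c a a = 2)
    (hsymm : ∀ a b, c a b = c b a)
    (hoff : ∀ a b, a ≠ b → c a b = 0 ∨ c a b = -1)
    (W : Type) [Group W]
    (cs : CoxeterSystem (cartanToCoxeter c hsymm) W)
    (w0 : W)
    (hlong : ∀ w : W, cs.length w ≤ cs.length w0)
    (hN : cs.length w0 = N)
    (i : ℤ → Fin n)
    (hredi : cs.wordProd (wordOf N i) = w0)
    (hnegi : ∀ a : Fin n, i (negIdx a) = a)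
    (kpi : ℤ → ℤ) (hkpi : IsSucc N i kpi)
    (m : Fin n → ℕ) (hm : IsMult N i m)
    (pos : Fin n → ℕ → ℤ) (hpos : IsPos N i m pos)
    : ∀ (a : Fin n) (lam : Fin n → ℝ) (x : ℤ → ℝ),
      (∀ b : Fin n, 0 < lam b) → (∀ ℓ ∈ Finset.Icc 1 (N : ℤ), 0 < x ℓ) →
      WNeg m pos (grC N c i kpi pos lam x) a = nuFun N c i lam x a ∧
      WLast N (grC N c i kpi pos lam x) = x (N : ℤ) :=
  statement6_general n N hn c hdiag hsymm W cs w0 hlong hN i hnegi kpi hkpi m hm pos hpos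
end
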